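/- Let n ∈ ℕ and let h_μ, h_σ, r_μ, r_σ, t_μ, t_σ ∈ ℝⁿ with every entry of h_σ, r_σ, t_σ nonzero. Let x₀ be the product over i of the standard Gaussian measure gaussianReal 0 1 (a probability measure on ℝⁿ, the standard multivariate normal N(0, I)). Define A(x) = r_σ ⊙ (h_σ ⊙ x + h_μ) + r_μ and B(x) = t_σ ⊙ x + t_μ. Then W₂²(A_*x₀, B_*x₀) = ‖r_σ ⊙ h_μ + r_μ − t_μ‖² + ‖|r_σ ⊙ h_σ| − |t_σ|‖², where A_*x₀ and B_*x₀ denote the pushforward measures of x₀ under A and B. -/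

import Mathlib

open MeasureTheory ProbabilityTheory
open scoped ENNReal NNReal

/-- Squared 2-Wasserstein distance between two measures on `ℝⁿ = (Fin n → ℝ)` with the
Euclidean norm `‖x - y‖² = ∑ i, (x i - y i)²`: the infimum over all couplings `γ` of `p` and
`q` of `∫ ‖x - y‖² dγ(x, y)`. -/
noncomputable def W2sqPi {n : ℕ} (p q : Measure (Fin n → ℝ)) : ℝ :=
  sInf { c | ∃ γ : Measure ((Fin n → ℝ) × (Fin n → ℝ)), IsProbabilityMeasure γ ∧
    γ.map Prod.fst = p ∧ γ.map Prod.snd = q ∧ c = ∫ z, ∑ i, (z.1 i - z.2 i) ^ 2 ∂γ }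

section W2Helpers
open Real

lemma gaussianStd_eq : gaussianReal 0 1 =
    (volume : Measure ℝ).withDensity (fun x => ((gaussianPDFReal 0 1 x).toNNReal : ℝ≥0∞)) := by
  rw [gaussianReal_of_var_ne_zero _ one_ne_zero]
  rfl

lemma integral_gaussianStd (g : ℝ → ℝ) :
    ∫ x, g x ∂(gaussianReal 0 1) = ∫ x, gaussianPDFReal 0 1 x * g x := by
  rw [gaussianStd_eq, integral_withDensity_eq_integral_smul
    ((measurable_gaussianPDFReal 0 1).real_toNNReal) g]
  congr 1
  funext x
  rw [NNReal.smul_def, smul_eq_mul, Real.coe_toNNReal _ (gaussianPDFReal_nonneg 0 1 x)]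

lemma integrable_gaussianStd_iff (g : ℝ → ℝ) (hg : AEStronglyMeasurable g (gaussianReal 0 1)) :
    Integrable g (gaussianReal 0 1) ↔ Integrable (fun x => gaussianPDFReal 0 1 x * g x) volume := by
  rw [gaussianStd_eq] at hg ⊢
  rw [integrable_withDensity_iff_integrable_smul₀]
  · constructor <;> intro h <;> refine h.congr (Filter.Eventually.of_forall fun x => ?_) <;>
      simp [NNReal.smul_def, Real.coe_toNNReal _ (gaussianPDFReal_nonneg 0 1 x)]
  · exact ((measurable_gaussianPDFReal 0 1).real_toNNReal).aemeasurable

lemma gaussianPDFReal_std (x : ℝ) :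
    gaussianPDFReal 0 1 x = (Real.sqrt (2 * π))⁻¹ * Real.exp (-(1/2) * x ^ 2) := by
  rw [gaussianPDFReal]
  norm_num
  left
  ring_nf

lemma integrable_sq_gaussianStd : Integrable (fun x : ℝ => x ^ 2) (gaussianReal 0 1) := by
  rw [integrable_gaussianStd_iff _ (by fun_prop)]
  have h := (integrable_rpow_mul_exp_neg_mul_sq (b := 1/2) (by norm_num) (s := 2)
    (by norm_num)).const_mul (Real.sqrt (2 * π))⁻¹
  refine h.congr (Filter.Eventually.of_forall fun x => ?_)
  have : x ^ (2 : ℝ) = x ^ 2 := by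
    rw [show (2:ℝ) = ((2:ℕ):ℝ) by norm_num, Real.rpow_natCast]
  simp only [gaussianPDFReal_std, this]; ring

lemma integrable_id_gaussianStd : Integrable (fun x : ℝ => x) (gaussianReal 0 1) := by
  rw [integrable_gaussianStd_iff _ (by exact aestronglyMeasurable_id)]
  have h := (integrable_rpow_mul_exp_neg_mul_sq (b := 1/2) (by norm_num) (s := 1)
    (by norm_num)).const_mul (Real.sqrt (2 * π))⁻¹
  refine h.congr (Filter.Eventually.of_forall fun x => ?_)
  simp only [gaussianPDFReal_std, Real.rpow_one]; ring

lemma gaussianStd_map_neg : (gaussianReal 0 1).map (fun x : ℝ => -x) = gaussianReal 0 1 := by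
  have : (fun x : ℝ => -x) = ((-1 : ℝ) * ·) := by funext x; ring
  rw [this, gaussianReal_map_const_mul]
  norm_num

lemma integral_id_gaussianStd : ∫ x, x ∂(gaussianReal 0 1) = 0 := by
  have h : ∫ x, x ∂(gaussianReal 0 1) = ∫ x, -x ∂(gaussianReal 0 1) := by
    conv_lhs => rw [← gaussianStd_map_neg]
    rw [integral_map (φ := fun x : ℝ => -x) (f := fun y : ℝ => y) (by fun_prop) (by exact aestronglyMeasurable_id)]
  rw [integral_neg] at h
  linarith

lemma integral_sq_gaussianStd : ∫ x, x ^ 2 ∂(gaussianReal 0 1) = 1 := by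
  rw [integral_gaussianStd]
  have h1 : ∫ x : ℝ, gaussianPDFReal 0 1 x * x ^ 2 =
      (Real.sqrt (2 * π))⁻¹ * ∫ x : ℝ, x ^ 2 * Real.exp (-(1/2) * x ^ 2) := by
    rw [← integral_const_mul]
    congr 1; funext x; rw [gaussianPDFReal_std]; ring
  rw [h1]
  have h2 : ∫ x : ℝ, x ^ 2 * Real.exp (-(1/2) * x ^ 2) =
      2 * ∫ x in Set.Ioi (0:ℝ), x ^ 2 * Real.exp (-(1/2) * x ^ 2) := by
    rw [← integral_comp_abs (f := fun x => x ^ 2 * Real.exp (-(1/2) * x ^ 2))]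
    congr 1; funext x; rw [sq_abs]
  have h3 : ∫ x in Set.Ioi (0:ℝ), x ^ 2 * Real.exp (-(1/2) * x ^ 2) =
      ((1:ℝ)/2) ^ (-((2:ℝ) + 1) / 2) * (1 / 2) * Real.Gamma (((2:ℝ) + 1) / 2) := by
    rw [← integral_rpow_mul_exp_neg_mul_rpow (p := 2) (q := 2) (b := 1/2) (by norm_num)
      (by norm_num) (by norm_num)]
    refine setIntegral_congr_fun measurableSet_Ioi fun x hx => ?_
    have : x ^ (2 : ℝ) = x ^ 2 := by
      rw [show (2:ℝ) = ((2:ℕ):ℝ) by norm_num, Real.rpow_natCast]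
    rw [this]
  rw [h2, h3]
  have hG : Real.Gamma (((2:ℝ) + 1) / 2) = Real.sqrt π / 2 := by
    rw [show ((2:ℝ)+1)/2 = 1/2 + 1 by norm_num, Real.Gamma_add_one (by norm_num),
      Real.Gamma_one_half_eq]
    ring
  have hb : ((1:ℝ)/2) ^ (-((2:ℝ) + 1) / 2) = 2 * Real.sqrt 2 := by
    rw [show (-((2:ℝ)+1)/2) = -(3/2) by norm_num, one_div, Real.inv_rpow (by norm_num),
      ← Real.rpow_neg (by norm_num), neg_neg, show (3/2 : ℝ) = 1 + 1/2 by norm_num,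
      Real.rpow_add (by norm_num), Real.rpow_one, ← Real.sqrt_eq_rpow]
  rw [hG, hb]
  rw [show (2:ℝ) * (2 * Real.sqrt 2 * (1/2) * (Real.sqrt π / 2)) = Real.sqrt 2 * Real.sqrt π
    by ring, ← Real.sqrt_mul (by norm_num)]
  rw [inv_mul_cancel₀ (by positivity)]

lemma gaussianStd_map_affine (c d : ℝ) :
    (gaussianReal 0 1).map (fun t => c * t + d) = gaussianReal d ⟨c ^ 2, sq_nonneg c⟩ := by
  have h : (fun t : ℝ => c * t + d) = (fun y => y + d) ∘ (c * ·) := rfl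
  rw [h, ← Measure.map_map (measurable_add_const d) (measurable_const_mul c),
    gaussianReal_map_const_mul, gaussianReal_map_add_const]
  norm_num
  rfl

lemma gaussianReal_repr (m : ℝ) (v : ℝ≥0) :
    gaussianReal m v = (gaussianReal 0 1).map (fun t => Real.sqrt v * t + m) := by
  rw [gaussianStd_map_affine]
  congr 1
  ext
  simp [Real.sq_sqrt v.coe_nonneg]
  rfl

lemma integrable_affine_gaussianStd (α β : ℝ) :
    Integrable (fun t : ℝ => α * t + β) (gaussianReal 0 1) :=
  (integrable_id_gaussianStd.const_mul α).add (integrable_const β)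

lemma integrable_affine_sq_gaussianStd (α β : ℝ) :
    Integrable (fun t : ℝ => (α * t + β) ^ 2) (gaussianReal 0 1) := by
  have h : (fun t : ℝ => (α * t + β) ^ 2) =
      fun t => α ^ 2 * t ^ 2 + ((2 * α * β) * t + β ^ 2) := by funext t; ring
  rw [h]
  exact (integrable_sq_gaussianStd.const_mul _).add
    ((integrable_id_gaussianStd.const_mul _).add (integrable_const _))

lemma integral_affine_gaussianStd (α β : ℝ) :
    ∫ t, (α * t + β) ∂(gaussianReal 0 1) = β := by
  have Ia : Integrable (fun t : ℝ => α * t) (gaussianReal 0 1) := by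
    exact integrable_id_gaussianStd.const_mul α
  rw [integral_add Ia (integrable_const β),
    integral_const_mul, integral_id_gaussianStd, integral_const]
  simp

lemma integral_affine_sq_gaussianStd (α β : ℝ) :
    ∫ t, (α * t + β) ^ 2 ∂(gaussianReal 0 1) = α ^ 2 + β ^ 2 := by
  have h : (fun t : ℝ => (α * t + β) ^ 2) =
      fun t => α ^ 2 * t ^ 2 + ((2 * α * β) * t + β ^ 2) := by funext t; ring
  have Ib : Integrable (fun t : ℝ => (2 * α * β) * t + β ^ 2) (gaussianReal 0 1) := by
    exact (integrable_id_gaussianStd.const_mul _).add (integrable_const _)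
  rw [h, integral_add (integrable_sq_gaussianStd.const_mul _) Ib,
    integral_add (integrable_id_gaussianStd.const_mul _) (integrable_const _),
    integral_const_mul, integral_const_mul, integral_sq_gaussianStd, integral_id_gaussianStd,
    integral_const]
  simp

lemma integrable_id_gaussianReal (m : ℝ) (v : ℝ≥0) :
    Integrable (fun x : ℝ => x) (gaussianReal m v) := by
  rw [gaussianReal_repr m v,
    integrable_map_measure (by exact aestronglyMeasurable_id) (by fun_prop)]
  exact integrable_affine_gaussianStd _ _

lemma integrable_sub_mean_sq_gaussianReal (m : ℝ) (v : ℝ≥0) :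
    Integrable (fun x : ℝ => (x - m) ^ 2) (gaussianReal m v) := by
  rw [gaussianReal_repr m v, integrable_map_measure ((measurable_id'.sub_const m).pow_const 2).aestronglyMeasurable (by fun_prop)]
  have h : ((fun x : ℝ => (x - m) ^ 2) ∘ fun t => Real.sqrt v * t + m) =
      fun t => (Real.sqrt v * t + 0) ^ 2 := by funext t; simp only [Function.comp]; ring
  rw [h]
  exact integrable_affine_sq_gaussianStd _ _

lemma integral_id_gaussianReal (m : ℝ) (v : ℝ≥0) :
    ∫ x, x ∂(gaussianReal m v) = m := by
  rw [gaussianReal_repr m v,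
    integral_map (by fun_prop) (by exact aestronglyMeasurable_id)]
  exact integral_affine_gaussianStd _ _

lemma integral_sub_mean_sq_gaussianReal (m : ℝ) (v : ℝ≥0) :
    ∫ x, (x - m) ^ 2 ∂(gaussianReal m v) = v := by
  rw [gaussianReal_repr m v, integral_map (by fun_prop) ((measurable_id'.sub_const m).pow_const 2).aestronglyMeasurable]
  have h : (fun t : ℝ => (Real.sqrt v * t + m - m) ^ 2) = fun t => (Real.sqrt v * t + 0) ^ 2 := by
    funext t; ring
  calc ∫ t, (Real.sqrt v * t + m - m) ^ 2 ∂(gaussianReal 0 1)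
      = ∫ t, (Real.sqrt v * t + 0) ^ 2 ∂(gaussianReal 0 1) := by rw [h]
    _ = (Real.sqrt v) ^ 2 + 0 ^ 2 := integral_affine_sq_gaussianStd _ _
    _ = v := by simp [Real.sq_sqrt v.coe_nonneg]

section oneD

variable {m1 m2 : ℝ} {v1 v2 : ℝ≥0} (pp : Measure (ℝ × ℝ)) [IsProbabilityMeasure pp]

lemma integrable_fst_sub_sq (h1 : pp.map Prod.fst = gaussianReal m1 v1) :
    Integrable (fun z : ℝ × ℝ => (z.1 - m1) ^ 2) pp := by
  have h := integrable_sub_mean_sq_gaussianReal m1 v1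
  rw [← h1, integrable_map_measure ((measurable_id'.sub_const m1).pow_const 2).aestronglyMeasurable
    measurable_fst.aemeasurable] at h
  exact h

lemma integrable_snd_sub_sq (h2 : pp.map Prod.snd = gaussianReal m2 v2) :
    Integrable (fun z : ℝ × ℝ => (z.2 - m2) ^ 2) pp := by
  have h := integrable_sub_mean_sq_gaussianReal m2 v2
  rw [← h2, integrable_map_measure ((measurable_id'.sub_const m2).pow_const 2).aestronglyMeasurable
    measurable_snd.aemeasurable] at h
  exact h

lemma integrable_fst_sub (h1 : pp.map Prod.fst = gaussianReal m1 v1) :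
    Integrable (fun z : ℝ × ℝ => z.1 - m1) pp := by
  have h : Integrable (fun x : ℝ => x - m1) (gaussianReal m1 v1) := by
    exact (integrable_id_gaussianReal m1 v1).sub (integrable_const m1)
  rw [← h1, integrable_map_measure (measurable_id'.sub_const m1).aestronglyMeasurable
    measurable_fst.aemeasurable] at h
  exact h

lemma integrable_snd_sub (h2 : pp.map Prod.snd = gaussianReal m2 v2) :
    Integrable (fun z : ℝ × ℝ => z.2 - m2) pp := by
  have h : Integrable (fun x : ℝ => x - m2) (gaussianReal m2 v2) := by
    exact (integrable_id_gaussianReal m2 v2).sub (integrable_const m2)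
  rw [← h2, integrable_map_measure (measurable_id'.sub_const m2).aestronglyMeasurable
    measurable_snd.aemeasurable] at h
  exact h

lemma integrable_mixed (h1 : pp.map Prod.fst = gaussianReal m1 v1)
    (h2 : pp.map Prod.snd = gaussianReal m2 v2) :
    Integrable (fun z : ℝ × ℝ => (z.1 - m1) * (z.2 - m2)) pp := by
  have hI : Integrable (fun z : ℝ × ℝ => 2⁻¹ * ((z.1 - m1) ^ 2 + (z.2 - m2) ^ 2)) pp := by
    exact ((integrable_fst_sub_sq pp h1).add (integrable_snd_sub_sq pp h2)).const_mul _
  refine hI.mono' ?_ (Filter.Eventually.of_forall fun z => ?_)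
  · exact (((measurable_fst.sub_const m1).mul (measurable_snd.sub_const m2)).aestronglyMeasurable)
  · rw [Real.norm_eq_abs, abs_mul]
    nlinarith [sq_nonneg (|z.1 - m1| - |z.2 - m2|), sq_abs (z.1 - m1), sq_abs (z.2 - m2),
      abs_nonneg (z.1 - m1), abs_nonneg (z.2 - m2)]

lemma integral_fst_sub_sq (h1 : pp.map Prod.fst = gaussianReal m1 v1) :
    ∫ z, (z.1 - m1) ^ 2 ∂pp = v1 := by
  have h := integral_map (φ := Prod.fst) (f := fun x : ℝ => (x - m1) ^ 2) (μ := pp)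
    measurable_fst.aemeasurable
    (by rw [h1]; exact ((measurable_id'.sub_const m1).pow_const 2).aestronglyMeasurable)
  rw [h1, integral_sub_mean_sq_gaussianReal] at h
  exact h.symm

lemma integral_snd_sub_sq (h2 : pp.map Prod.snd = gaussianReal m2 v2) :
    ∫ z, (z.2 - m2) ^ 2 ∂pp = v2 := by
  have h := integral_map (φ := Prod.snd) (f := fun x : ℝ => (x - m2) ^ 2) (μ := pp)
    measurable_snd.aemeasurable
    (by rw [h2]; exact ((measurable_id'.sub_const m2).pow_const 2).aestronglyMeasurable)
  rw [h2, integral_sub_mean_sq_gaussianReal] at h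
  exact h.symm

lemma integral_fst_sub (h1 : pp.map Prod.fst = gaussianReal m1 v1) :
    ∫ z, (z.1 - m1) ∂pp = 0 := by
  have h := integral_map (φ := Prod.fst) (f := fun x : ℝ => x - m1) (μ := pp)
    measurable_fst.aemeasurable
    (by rw [h1]; exact (measurable_id'.sub_const m1).aestronglyMeasurable)
  rw [h1, integral_sub (integrable_id_gaussianReal m1 v1) (integrable_const m1),
    _root_.integral_id_gaussianReal, integral_const] at h
  simp only [probReal_univ, measure_univ, ENNReal.toReal_one, smul_eq_mul, one_mul, sub_self] at h
  exact h.symm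

lemma integral_snd_sub (h2 : pp.map Prod.snd = gaussianReal m2 v2) :
    ∫ z, (z.2 - m2) ∂pp = 0 := by
  have h := integral_map (φ := Prod.snd) (f := fun x : ℝ => x - m2) (μ := pp)
    measurable_snd.aemeasurable
    (by rw [h2]; exact (measurable_id'.sub_const m2).aestronglyMeasurable)
  rw [h2, integral_sub (integrable_id_gaussianReal m2 v2) (integrable_const m2),
    _root_.integral_id_gaussianReal, integral_const] at h
  simp only [probReal_univ, measure_univ, ENNReal.toReal_one, smul_eq_mul, one_mul, sub_self] at h
  exact h.symm

lemma oneD_lower (h1 : pp.map Prod.fst = gaussianReal m1 v1)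
    (h2 : pp.map Prod.snd = gaussianReal m2 v2) (hv1 : 0 < (v1 : ℝ)) (hv2 : 0 < (v2 : ℝ)) :
    (m1 - m2) ^ 2 + (Real.sqrt v1 - Real.sqrt v2) ^ 2 ≤ ∫ z, (z.1 - z.2) ^ 2 ∂pp := by
  set s := Real.sqrt v1 with hs_def
  set t := Real.sqrt v2 with ht_def
  have hs : 0 < s := Real.sqrt_pos.mpr hv1
  have ht : 0 < t := Real.sqrt_pos.mpr hv2
  have hs2 : s ^ 2 = v1 := Real.sq_sqrt v1.coe_nonneg
  have ht2 : t ^ 2 = v2 := Real.sq_sqrt v2.coe_nonneg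
  have Iu2 := integrable_fst_sub_sq pp h1
  have Iw2 := integrable_snd_sub_sq pp h2
  have Iu := integrable_fst_sub pp h1
  have Iw := integrable_snd_sub pp h2
  have Iuw := integrable_mixed pp h1 h2
  have Eu2 := integral_fst_sub_sq pp h1
  have Ew2 := integral_snd_sub_sq pp h2
  have Eu := integral_fst_sub pp h1
  have Ew := integral_snd_sub pp h2
  -- Cauchy-Schwarz type bound
  have hCS : ∫ z, (z.1 - m1) * (z.2 - m2) ∂pp ≤ s * t := by
    have hpoint : ∀ z : ℝ × ℝ, (2 * s * t) * ((z.1 - m1) * (z.2 - m2)) ≤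
        t ^ 2 * (z.1 - m1) ^ 2 + s ^ 2 * (z.2 - m2) ^ 2 := by
      intro z
      nlinarith [sq_nonneg (t * (z.1 - m1) - s * (z.2 - m2))]
    have Isum : Integrable (fun z : ℝ × ℝ =>
        t ^ 2 * (z.1 - m1) ^ 2 + s ^ 2 * (z.2 - m2) ^ 2) pp := by
      exact (Iu2.const_mul (t ^ 2)).add (Iw2.const_mul (s ^ 2))
    have hint := integral_mono (Iuw.const_mul (2 * s * t)) Isum hpoint
    rw [integral_const_mul, integral_add (Iu2.const_mul _) (Iw2.const_mul _),
      integral_const_mul, integral_const_mul, Eu2, Ew2] at hint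
    nlinarith [hint, mul_pos hs ht]
  -- expand the square
  have hexp : (fun z : ℝ × ℝ => (z.1 - z.2) ^ 2) = fun z =>
      (z.1 - m1) ^ 2 + ((z.2 - m2) ^ 2 + ((m1 - m2) ^ 2 +
        ((-2 : ℝ) * ((z.1 - m1) * (z.2 - m2)) +
          ((2 * (m1 - m2)) * (z.1 - m1) + (-(2 * (m1 - m2))) * (z.2 - m2))))) := by
    funext z; ring
  have J5 : Integrable (fun z : ℝ × ℝ =>
      (2 * (m1 - m2)) * (z.1 - m1) + (-(2 * (m1 - m2))) * (z.2 - m2)) pp := by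
    exact (Iu.const_mul _).add (Iw.const_mul _)
  have J4 : Integrable (fun z : ℝ × ℝ => (-2 : ℝ) * ((z.1 - m1) * (z.2 - m2)) +
      ((2 * (m1 - m2)) * (z.1 - m1) + (-(2 * (m1 - m2))) * (z.2 - m2))) pp := by
    exact (Iuw.const_mul _).add J5
  have J3 : Integrable (fun z : ℝ × ℝ => (m1 - m2) ^ 2 +
      ((-2 : ℝ) * ((z.1 - m1) * (z.2 - m2)) +
        ((2 * (m1 - m2)) * (z.1 - m1) + (-(2 * (m1 - m2))) * (z.2 - m2)))) pp := by
    exact (integrable_const _).add J4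
  have J2 : Integrable (fun z : ℝ × ℝ => (z.2 - m2) ^ 2 + ((m1 - m2) ^ 2 +
      ((-2 : ℝ) * ((z.1 - m1) * (z.2 - m2)) +
        ((2 * (m1 - m2)) * (z.1 - m1) + (-(2 * (m1 - m2))) * (z.2 - m2))))) pp := by
    exact Iw2.add J3
  have key : ∫ z, (z.1 - z.2) ^ 2 ∂pp =
      (v1 : ℝ) + v2 + (m1 - m2) ^ 2 - 2 * ∫ z, (z.1 - m1) * (z.2 - m2) ∂pp := by
    rw [hexp, integral_add Iu2 J2, integral_add Iw2 J3, integral_add (integrable_const _) J4,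
      integral_add (Iuw.const_mul _) J5, integral_add (Iu.const_mul _) (Iw.const_mul _),
      integral_const_mul, integral_const_mul, integral_const_mul, Eu2, Ew2, Eu, Ew, integral_const]
    simp only [probReal_univ, measure_univ, ENNReal.toReal_one, smul_eq_mul, one_mul, mul_zero]
    ring
  rw [key]
  nlinarith [hCS]

end oneD

lemma pi_map_eval {n : ℕ} (ν : Fin n → Measure ℝ) [∀ i, IsProbabilityMeasure (ν i)] (i : Fin n) :
    (Measure.pi ν).map (fun x => x i) = ν i := by
  ext s hs
  rw [Measure.map_apply (measurable_pi_apply i) hs]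
  have hpre : (fun x : Fin n → ℝ => x i) ⁻¹' s =
      Set.pi Set.univ (Function.update (fun _ => Set.univ) i s) := by
    rw [← Set.eval_preimage]
  rw [hpre, Measure.pi_pi]
  rw [Finset.prod_eq_single i (fun j _ hj => by
    rw [Function.update_of_ne hj]; exact measure_univ) (fun h => absurd (Finset.mem_univ i) h)]
  rw [Function.update_self]

lemma pi_gaussian_map_affine {n : ℕ} (u w : Fin n → ℝ) :
    (Measure.pi fun _ : Fin n => gaussianReal 0 1).map (fun x => u * x + w) =
      Measure.pi (fun i => gaussianReal (w i) ⟨(u i) ^ 2, sq_nonneg _⟩) := by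
  have h : (fun x : Fin n → ℝ => u * x + w) = fun x i => (u i) * (x i) + w i := rfl
  rw [h]
  exact (measurePreserving_pi (fun _ => gaussianReal 0 1) (fun i => gaussianReal (w i) ⟨(u i) ^ 2, sq_nonneg _⟩)
    (hν := fun i => @IsFiniteMeasure.toSigmaFinite _ _ _
      ⟨lt_of_eq_of_lt (@measure_univ _ _ _
        (ProbabilityTheory.instIsProbabilityMeasureGaussianReal _ _)) ENNReal.one_lt_top⟩) (fun i =>
    ⟨(measurable_id'.const_mul (u i)).add_const (w i), gaussianStd_map_affine (u i) (w i)⟩)).map_eq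

lemma integrable_sub_sq {m1 m2 : ℝ} {v1 v2 : ℝ≥0} (pp : Measure (ℝ × ℝ))
    [IsProbabilityMeasure pp] (h1 : pp.map Prod.fst = gaussianReal m1 v1)
    (h2 : pp.map Prod.snd = gaussianReal m2 v2) :
    Integrable (fun z : ℝ × ℝ => (z.1 - z.2) ^ 2) pp := by
  have hI : Integrable (fun z : ℝ × ℝ =>
      4 * (z.1 - m1) ^ 2 + (4 * (z.2 - m2) ^ 2 + 2 * (m1 - m2) ^ 2)) pp := by
    exact ((integrable_fst_sub_sq pp h1).const_mul 4).add
      (((integrable_snd_sub_sq pp h2).const_mul 4).add (integrable_const _))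
  refine hI.mono' ((measurable_fst.sub measurable_snd).pow_const 2).aestronglyMeasurable
    (Filter.Eventually.of_forall fun z => ?_)
  rw [Real.norm_eq_abs, abs_of_nonneg (sq_nonneg _)]
  nlinarith [sq_nonneg ((z.1 - m1) - (z.2 - m2)), sq_nonneg ((z.1 - m1) + (z.2 - m2)),
    sq_nonneg ((z.1 - m1) - (z.2 - m2) - (m1 - m2)), sq_nonneg ((z.1 - m1) - (z.2 - m2) + (m1 - m2))]

section piLemmas

variable {n : ℕ}

lemma marginal_integral (g : ℝ → ℝ) (hg : AEStronglyMeasurable g (gaussianReal 0 1)) (i : Fin n) :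
    ∫ x, g (x i) ∂(Measure.pi fun _ : Fin n => gaussianReal 0 1) = ∫ t, g t ∂(gaussianReal 0 1) := by
  conv_rhs => rw [← pi_map_eval (fun _ : Fin n => gaussianReal 0 1) i]
  rw [integral_map (measurable_pi_apply i).aemeasurable
      (by rwa [pi_map_eval (fun _ : Fin n => gaussianReal 0 1) i])]

lemma marginal_integrable (g : ℝ → ℝ) (hg : AEStronglyMeasurable g (gaussianReal 0 1))
    (hgi : Integrable g (gaussianReal 0 1)) (i : Fin n) :
    Integrable (fun x : Fin n → ℝ => g (x i)) (Measure.pi fun _ : Fin n => gaussianReal 0 1) := by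
  rw [← pi_map_eval (fun _ : Fin n => gaussianReal 0 1) i] at hgi
  exact (integrable_map_measure
    (by rwa [pi_map_eval (fun _ : Fin n => gaussianReal 0 1) i])
    (measurable_pi_apply i).aemeasurable).mp hgi

lemma integral_sum_affine_sq (α β : Fin n → ℝ) :
    ∫ x, ∑ i, (α i * x i + β i) ^ 2 ∂(Measure.pi fun _ : Fin n => gaussianReal 0 1) =
      ∑ i, (α i ^ 2 + β i ^ 2) := by
  have hmeas : ∀ i : Fin n, AEStronglyMeasurable (fun t : ℝ => (α i * t + β i) ^ 2)
      (gaussianReal 0 1) :=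
    fun i => (((measurable_id'.const_mul (α i)).add_const (β i)).pow_const 2).aestronglyMeasurable
  rw [integral_finset_sum _ (fun i _ =>
    marginal_integrable _ (hmeas i) (integrable_affine_sq_gaussianStd _ _) i)]
  exact Finset.sum_congr rfl fun i _ => by
    rw [marginal_integral _ (hmeas i) i, integral_affine_sq_gaussianStd]

end piLemmas

end W2Helpers

/-- NFE-1 scoring function, Gaussian case: the squared 2-Wasserstein distance between the
pushforwards of the standard Gaussian measure on ℝⁿ under the affine maps
A(x) = r_σ ⊙ (h_σ ⊙ x + h_μ) + r_μ and B(x) = t_σ ⊙ x + t_μ. -/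
theorem W2sq_affine_pushforward_gaussian (n : ℕ) (hμ hσ rμ rσ tμ tσ : Fin n → ℝ)
    (hhσ : ∀ i, hσ i ≠ 0) (hrσ : ∀ i, rσ i ≠ 0) (htσ : ∀ i, tσ i ≠ 0) :
    W2sqPi
      ((Measure.pi fun _ : Fin n => gaussianReal 0 1).map
        fun x => rσ * (hσ * x + hμ) + rμ)
      ((Measure.pi fun _ : Fin n => gaussianReal 0 1).map
        fun x => tσ * x + tμ) =
      (∑ i, ((rσ * hμ + rμ - tμ) i) ^ 2) + ∑ i, ((|rσ * hσ| - |tσ|) i) ^ 2 := by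
  classical
  set x₀ : Measure (Fin n → ℝ) := Measure.pi fun _ : Fin n => gaussianReal 0 1 with hx₀
  set A : Fin n → ℝ := rσ * hσ with hA
  set B : Fin n → ℝ := rσ * hμ + rμ with hB
  have hAne : ∀ i, A i ≠ 0 := fun i => mul_ne_zero (hrσ i) (hhσ i)
  set P : Measure (Fin n → ℝ) :=
    Measure.pi (fun i => gaussianReal (B i) ⟨A i ^ 2, sq_nonneg _⟩) with hP
  set Q : Measure (Fin n → ℝ) :=
    Measure.pi (fun i => gaussianReal (tμ i) ⟨tσ i ^ 2, sq_nonneg _⟩) with hQ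
  have hp : x₀.map (fun x => rσ * (hσ * x + hμ) + rμ) = P := by
    have h : (fun x : Fin n → ℝ => rσ * (hσ * x + hμ) + rμ) = fun x => A * x + B := by
      funext x; funext i
      show rσ i * (hσ i * x i + hμ i) + rμ i = (rσ i * hσ i) * x i + (rσ i * hμ i + rμ i)
      ring
    rw [h, hx₀, pi_gaussian_map_affine]
  have hq : x₀.map (fun x => tσ * x + tμ) = Q := by rw [hx₀, pi_gaussian_map_affine]
  have habsP : x₀.map (fun x => |A| * x + B) = P := by
    rw [hx₀, pi_gaussian_map_affine]
    congr 1; funext i; congr 1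
    ext; exact sq_abs (A i)
  have habsQ : x₀.map (fun x => |tσ| * x + tμ) = Q := by
    rw [hx₀, pi_gaussian_map_affine]
    congr 1; funext i; congr 1
    ext; exact sq_abs (tσ i)
  have hVsum : ((∑ i, ((B - tμ) i) ^ 2) + ∑ i, ((|A| - |tσ|) i) ^ 2)
      = ∑ i, (((|A| - |tσ|) i) ^ 2 + ((B - tμ) i) ^ 2) := by
    rw [Finset.sum_add_distrib, add_comm]
  -- the optimal coupling
  have hMuw : ∀ (u w : Fin n → ℝ), Measurable (fun x : Fin n → ℝ => u * x + w) := fun u w =>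
    measurable_pi_iff.mpr fun i => by
      show Measurable fun x : Fin n → ℝ => u i * x i + w i
      exact Measurable.add_const (Measurable.const_mul
        (measurable_pi_apply i : Measurable fun x : Fin n → ℝ => x i) (u i)) (w i)
  set F : (Fin n → ℝ) → (Fin n → ℝ) × (Fin n → ℝ) :=
    fun x => (|A| * x + B, |tσ| * x + tμ) with hFdef
  have hF : Measurable F := (hMuw _ _).prodMk (hMuw _ _)
  haveI : IsProbabilityMeasure (x₀.map F) := Measure.isProbabilityMeasure_map hF.aemeasurable
  have hsm : Measurable (fun z : (Fin n → ℝ) × (Fin n → ℝ) => ∑ i, (z.1 i - z.2 i) ^ 2) :=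
    Finset.measurable_sum _ fun i _ =>
      (((measurable_pi_apply i).comp measurable_fst).sub
        ((measurable_pi_apply i).comp measurable_snd)).pow_const 2
  have hcost : ∫ z, ∑ i, (z.1 i - z.2 i) ^ 2 ∂(x₀.map F)
      = ∑ i, (((|A| - |tσ|) i) ^ 2 + ((B - tμ) i) ^ 2) := by
    rw [integral_map hF.aemeasurable hsm.aestronglyMeasurable]
    have h2 := integral_sum_affine_sq (n := n) (fun i => |A| i - |tσ| i) (fun i => B i - tμ i)
    refine Eq.trans ?_ h2
    congr 1
    funext x
    refine Finset.sum_congr rfl fun i _ => ?_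
    show ((|A| i * x i + B i) - (|tσ| i * x i + tμ i)) ^ 2 = _
    ring
  have hmem : ((∑ i, ((B - tμ) i) ^ 2) + ∑ i, ((|A| - |tσ|) i) ^ 2) ∈
      { c | ∃ γ : Measure ((Fin n → ℝ) × (Fin n → ℝ)), IsProbabilityMeasure γ ∧
        γ.map Prod.fst = x₀.map (fun x => rσ * (hσ * x + hμ) + rμ) ∧
        γ.map Prod.snd = x₀.map (fun x => tσ * x + tμ) ∧
        c = ∫ z, ∑ i, (z.1 i - z.2 i) ^ 2 ∂γ } := by
    refine ⟨x₀.map F, inferInstance, ?_, ?_, ?_⟩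
    · rw [Measure.map_map measurable_fst hF, hp]
      exact habsP
    · rw [Measure.map_map measurable_snd hF, hq]
      exact habsQ
    · exact hVsum.trans hcost.symm
  have hlb : ∀ c ∈ { c | ∃ γ : Measure ((Fin n → ℝ) × (Fin n → ℝ)), IsProbabilityMeasure γ ∧
        γ.map Prod.fst = x₀.map (fun x => rσ * (hσ * x + hμ) + rμ) ∧
        γ.map Prod.snd = x₀.map (fun x => tσ * x + tμ) ∧
        c = ∫ z, ∑ i, (z.1 i - z.2 i) ^ 2 ∂γ },
      ((∑ i, ((B - tμ) i) ^ 2) + ∑ i, ((|A| - |tσ|) i) ^ 2) ≤ c := by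
    rintro c ⟨γ, hγprob, hγ1, hγ2, rfl⟩
    haveI := hγprob
    rw [hp] at hγ1
    rw [hq] at hγ2
    have hgm : ∀ i : Fin n, Measurable (fun z : (Fin n → ℝ) × (Fin n → ℝ) => (z.1 i, z.2 i)) :=
      fun i => ((measurable_pi_apply i).comp measurable_fst).prodMk
        ((measurable_pi_apply i).comp measurable_snd)
    haveI : ∀ i : Fin n, IsProbabilityMeasure (γ.map (fun z => (z.1 i, z.2 i))) :=
      fun i => Measure.isProbabilityMeasure_map (hgm i).aemeasurable
    have hm1 : ∀ i : Fin n, (γ.map (fun z => (z.1 i, z.2 i))).map Prod.fst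
        = gaussianReal (B i) ⟨A i ^ 2, sq_nonneg _⟩ := by
      intro i
      rw [Measure.map_map measurable_fst (hgm i)]
      have h : (Prod.fst ∘ fun z : (Fin n → ℝ) × (Fin n → ℝ) => (z.1 i, z.2 i))
          = (fun x : Fin n → ℝ => x i) ∘ Prod.fst := rfl
      rw [h, ← Measure.map_map (measurable_pi_apply i) measurable_fst, hγ1, hP]
      exact @pi_map_eval _ (fun i => gaussianReal (B i) ⟨A i ^ 2, sq_nonneg _⟩)
        (fun i => ProbabilityTheory.instIsProbabilityMeasureGaussianReal _ _) i
    have hm2 : ∀ i : Fin n, (γ.map (fun z => (z.1 i, z.2 i))).map Prod.snd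
        = gaussianReal (tμ i) ⟨tσ i ^ 2, sq_nonneg _⟩ := by
      intro i
      rw [Measure.map_map measurable_snd (hgm i)]
      have h : (Prod.snd ∘ fun z : (Fin n → ℝ) × (Fin n → ℝ) => (z.1 i, z.2 i))
          = (fun x : Fin n → ℝ => x i) ∘ Prod.snd := rfl
      rw [h, ← Measure.map_map (measurable_pi_apply i) measurable_snd, hγ2, hQ]
      exact @pi_map_eval _ (fun i => gaussianReal (tμ i) ⟨tσ i ^ 2, sq_nonneg _⟩)
        (fun i => ProbabilityTheory.instIsProbabilityMeasureGaussianReal _ _) i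
    have hIn : ∀ i : Fin n, Integrable (fun z : (Fin n → ℝ) × (Fin n → ℝ) =>
        (z.1 i - z.2 i) ^ 2) γ := by
      intro i
      have h := integrable_sub_sq (γ.map (fun z => (z.1 i, z.2 i))) (hm1 i) (hm2 i)
      rw [integrable_map_measure (g := fun w : ℝ × ℝ => (w.1 - w.2) ^ 2)
        ((measurable_fst.sub measurable_snd).pow_const 2).aestronglyMeasurable
        (hgm i).aemeasurable] at h
      exact h
    rw [integral_finset_sum _ (fun i _ => hIn i)]
    refine le_trans (le_of_eq hVsum) (Finset.sum_le_sum fun i _ => ?_)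
    have hIeq : ∫ z, (z.1 i - z.2 i) ^ 2 ∂γ
        = ∫ w, (w.1 - w.2) ^ 2 ∂(γ.map (fun z => (z.1 i, z.2 i))) :=
      (integral_map (hgm i).aemeasurable
        ((measurable_fst.sub measurable_snd).pow_const 2).aestronglyMeasurable).symm
    rw [hIeq]
    have hv1 : (0 : ℝ) < ((⟨A i ^ 2, sq_nonneg _⟩ : ℝ≥0) : ℝ) :=
      lt_of_le_of_ne (sq_nonneg _) (Ne.symm (pow_ne_zero 2 (hAne i)))
    have hv2 : (0 : ℝ) < ((⟨tσ i ^ 2, sq_nonneg _⟩ : ℝ≥0) : ℝ) :=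
      lt_of_le_of_ne (sq_nonneg _) (Ne.symm (pow_ne_zero 2 (htσ i)))
    have hb := oneD_lower (γ.map (fun z => (z.1 i, z.2 i))) (hm1 i) (hm2 i) hv1 hv2
    change (B i - tμ i) ^ 2 + (Real.sqrt (A i ^ 2) - Real.sqrt (tσ i ^ 2)) ^ 2 ≤ _ at hb
    simp only [Subtype.coe_mk, Real.sqrt_sq_eq_abs] at hb
    show (|A i| - |tσ i|) ^ 2 + (B i - tμ i) ^ 2 ≤ _
    linarith [hb]
  rw [W2sqPi]
  exact le_antisymm (csInf_le ⟨_, hlb⟩ hmem) (le_csInf ⟨_, hmem⟩ hlb)
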